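/- Let ξ, ζ be in the open unit disc 𝔻 ⊆ ℂ and θ ∈ ℝ, and set w = τ_ζ(e^{iθ}·ξ). Then |(ξ − w)/(1 − conj(w)·ξ)| = | 2i·ξ·sin(θ/2) + ζ·e^{−iθ/2} − conj(ζ)·e^{iθ/2}·ξ² | / | 2i·( sin(θ/2) + Im(ζ·conj(ξ)·e^{−iθ/2}) ) − e^{iθ/2}·(1 − |ξ|²) |; consequently the Poincaré distance satisfies d_P(ξ, τ_ζ(e^{iθ}ξ)) = 2·artanh of the right-hand side. -/

import Mathlib

/-!
Write `u = e^{iθ/2}`, so that `e^{iθ} = u²` and `conj u = u⁻¹`. Clearing the denominator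
`D = 1 + conj(ζ) u² ξ` of `w = τ_ζ(u² ξ)` gives two polynomial identities,
`(ξ - w) D = -u N` and `(1 - w conj ξ) D = -u M`, where `N` and `M` are the numerator and
denominator of the claimed formula once `2i sin(θ/2) = u - conj u` and `2i Im a = a - conj a`
are substituted. Since `|u| = 1` and `|1 - conj(w) ξ| = |1 - w conj ξ|`, the factors `u` and `D`
cancel in the ratio of norms.
-/

/-- The inverse hyperbolic tangent. -/
noncomputable def artanh (x : ℝ) : ℝ := Real.log ((1 + x) / (1 - x)) / 2

/-- The Poincaré distance on the unit disc. -/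
noncomputable def dP (z w : ℂ) : ℝ :=
  2 * artanh (norm (z - w) / norm (1 - (starRingEnd ℂ) w * z))

/-- The Möbius automorphism `τ_ζ(ξ) = (ξ + ζ)/(1 + conj(ζ) ξ)` of the unit disc. -/
noncomputable def moebius (ζ ξ : ℂ) : ℂ := (ξ + ζ) / (1 + (starRingEnd ℂ) ζ * ξ)

open Complex ComplexConjugate

lemma one_add_conj_mul_ne_zero {ζ z : ℂ} (hζ : ‖ζ‖ < 1) (hz : ‖z‖ ≤ 1) :
    1 + conj ζ * z ≠ 0 := by
  intro h
  have hlt : ‖conj ζ * z‖ < 1 := by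
    rw [norm_mul, norm_conj]
    exact mul_lt_one_of_nonneg_of_lt_one_left (norm_nonneg ζ) hζ hz
  rw [eq_neg_of_add_eq_zero_right h, norm_neg, norm_one] at hlt
  exact lt_irrefl 1 hlt

lemma norm_one_sub_conj_mul_comm (w ξ : ℂ) : ‖1 - conj w * ξ‖ = ‖1 - w * conj ξ‖ := by
  rw [← norm_conj, map_sub, map_one, map_mul, conj_conj]

section Rotation

variable {ζ ξ u : ℂ}

lemma sub_moebius_sq_mul_mul (hD : 1 + conj ζ * (u ^ 2 * ξ) ≠ 0) (hu : u * conj u = 1) :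
    (ξ - moebius ζ (u ^ 2 * ξ)) * (1 + conj ζ * (u ^ 2 * ξ)) =
      -u * (ξ * (u - conj u) + ζ * conj u - conj ζ * u * ξ ^ 2) := by
  rw [moebius, sub_mul, div_mul_cancel₀ _ hD]
  linear_combination (ζ - ξ) * hu

lemma one_sub_moebius_sq_mul_mul (hD : 1 + conj ζ * (u ^ 2 * ξ) ≠ 0) (hu : u * conj u = 1) :
    (1 - moebius ζ (u ^ 2 * ξ) * conj ξ) * (1 + conj ζ * (u ^ 2 * ξ)) =
      -u * ((u - conj u) + (ζ * conj ξ * conj u - conj (ζ * conj ξ * conj u))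
        - u * (1 - (‖ξ‖ : ℂ) ^ 2)) := by
  rw [moebius, sub_mul, mul_right_comm, div_mul_cancel₀ _ hD, ← mul_conj', map_mul, map_mul,
    conj_conj, conj_conj]
  linear_combination (ζ * conj ξ - 1) * hu

lemma norm_sub_moebius_sq_mul_div (hu : ‖u‖ = 1) (hζ : ‖ζ‖ < 1) (hξ : ‖ξ‖ < 1) :
    ‖(ξ - moebius ζ (u ^ 2 * ξ)) / (1 - conj (moebius ζ (u ^ 2 * ξ)) * ξ)‖ =
      ‖ξ * (u - conj u) + ζ * conj u - conj ζ * u * ξ ^ 2‖ /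
        ‖(u - conj u) + (ζ * conj ξ * conj u - conj (ζ * conj ξ * conj u))
          - u * (1 - (‖ξ‖ : ℂ) ^ 2)‖ := by
  have hD : 1 + conj ζ * (u ^ 2 * ξ) ≠ 0 :=
    one_add_conj_mul_ne_zero hζ (by rw [norm_mul, norm_pow, hu, one_pow, one_mul]; exact hξ.le)
  have hu' : u * conj u = 1 := by rw [mul_conj', hu]; norm_num
  have hnum := congrArg norm (sub_moebius_sq_mul_mul hD hu')
  have hden := congrArg norm (one_sub_moebius_sq_mul_mul hD hu')
  rw [norm_mul, norm_mul, norm_neg, hu, one_mul] at hnum hden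
  rw [norm_div, norm_one_sub_conj_mul_comm, ← hnum, ← hden,
    mul_div_mul_right _ _ (norm_ne_zero_iff.mpr hD)]

end Rotation

lemma two_mul_I_mul_sin (x : ℝ) :
    2 * I * (Real.sin x : ℂ) = exp (x * I) - conj (exp (x * I)) := by
  rw [← exp_conj, map_mul, conj_ofReal, conj_I, ofReal_sin, Complex.sin]
  ring_nf
  rw [I_sq]
  ring

/-- formula for the Poincaré distance `d_P(ξ, τ_ζ(e^{iθ}ξ))`. -/
theorem stmt_16 (ξ ζ : ℂ) (hξ : norm ξ < 1) (hζ : norm ζ < 1) (θ : ℝ)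
    (w : ℂ) (hw : w = moebius ζ (Complex.exp (θ * Complex.I) * ξ)) :
    norm ((ξ - w) / (1 - (starRingEnd ℂ) w * ξ)) =
      norm (2 * Complex.I * ξ * (Real.sin (θ / 2) : ℂ)
          + ζ * Complex.exp (-(θ / 2) * Complex.I)
          - (starRingEnd ℂ) ζ * Complex.exp ((θ / 2) * Complex.I) * ξ ^ 2) /
        norm (2 * Complex.I *
            ((Real.sin (θ / 2)
              + (ζ * (starRingEnd ℂ) ξ * Complex.exp (-(θ / 2) * Complex.I)).im : ℝ) : ℂ)
          - Complex.exp ((θ / 2) * Complex.I) * (1 - (norm ξ : ℂ) ^ 2)) ∧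
    dP ξ w =
      2 * artanh (norm (2 * Complex.I * ξ * (Real.sin (θ / 2) : ℂ)
          + ζ * Complex.exp (-(θ / 2) * Complex.I)
          - (starRingEnd ℂ) ζ * Complex.exp ((θ / 2) * Complex.I) * ξ ^ 2) /
        norm (2 * Complex.I *
            ((Real.sin (θ / 2)
              + (ζ * (starRingEnd ℂ) ξ * Complex.exp (-(θ / 2) * Complex.I)).im : ℝ) : ℂ)
          - Complex.exp ((θ / 2) * Complex.I) * (1 - (norm ξ : ℂ) ^ 2))) := by
  set u := exp (θ / 2 * I)
  have hu : ‖u‖ = 1 := by simpa using norm_exp_ofReal_mul_I (θ / 2)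
  have hconj : exp (-(θ / 2) * I) = conj u := by
    rw [← exp_conj, map_mul, map_div₀, conj_ofReal, conj_I, map_ofNat]; ring_nf
  have hsq : exp (θ * I) = u ^ 2 := by rw [← exp_nat_mul]; ring_nf
  have hsin : 2 * I * (Real.sin (θ / 2) : ℂ) = u - conj u := by
    simpa using two_mul_I_mul_sin (θ / 2)
  have hN : 2 * I * ξ * (Real.sin (θ / 2) : ℂ) + ζ * conj u - conj ζ * u * ξ ^ 2 =
      ξ * (u - conj u) + ζ * conj u - conj ζ * u * ξ ^ 2 := by
    linear_combination ξ * hsin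
  have hM : 2 * I * ((Real.sin (θ / 2) + (ζ * conj ξ * conj u).im : ℝ) : ℂ)
        - u * (1 - (‖ξ‖ : ℂ) ^ 2) =
      (u - conj u) + (ζ * conj ξ * conj u - conj (ζ * conj ξ * conj u))
        - u * (1 - (‖ξ‖ : ℂ) ^ 2) := by
    have him := sub_conj (ζ * conj ξ * conj u)
    rw [ofReal_mul, ofReal_ofNat] at him
    rw [ofReal_add]
    linear_combination hsin - him
  have hratio := norm_sub_moebius_sq_mul_div hu hζ hξ
  rw [← hsq, ← hw, ← hN, ← hM, ← hconj] at hratio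
  exact ⟨hratio, by rw [dP, ← norm_div, hratio]⟩
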